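/- Let n, k, r be natural numbers with r ≤ min(n,k), set ℓ = min(n,k) and p = r(r+1)/2. Let V ∈ ℝ^{n×r}, W ∈ ℝ^{n×p}, let h_q : ℝ^r → ℝ^{r(r+1)/2} be the quadratic feature map whose components are all products z_i z_j with 1 ≤ i ≤ j ≤ r, and let M = { V z + W h_q(z) : z ∈ ℝ^r } be the associated quadratic manifold. Let S ∈ ℝ^{n×k} have columns x^(1), …, x^(k) and singular values σ_1 ≥ … ≥ σ_ℓ. Then Σ_{i=1}^{k} inf_{x̂ ∈ M} ‖x̂ − x^(i)‖₂² ≥ Σ_{i=r(r+1)/2+r+1}^{ℓ} σ_i². -/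

import Mathlib

/-!
The manifold lies in the span `K` of the columns of `V` and `W`, a subspace of dimension at most
`m = r + r(r+1)/2`, so each distance from a column of `S` to the manifold is at least its distance
to `K`. Writing the columns in terms of the singular triplets, the squared residuals of all columns
sum to `∑ σⱼ² (1 - τⱼ)` with `τⱼ = ‖P_K uⱼ‖² ∈ [0, 1]` and, by Bessel's inequality in an
orthonormal basis of `K`, `∑ τⱼ ≤ m`. Since the `σⱼ²` decrease, this sum is smallest when the
weights `τⱼ` sit on the first `m` indices, where it equals the tail `∑_{j ≥ m} σⱼ²`.
-/

open Module Finset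

theorem card_subtype_fst_le_snd (r : ℕ) :
    Fintype.card {ij : Fin r × Fin r // ij.1 ≤ ij.2} = r * (r + 1) / 2 := by
  rw [← Fintype.card_congr Sym2.sortEquiv, Sym2.card, Fintype.card_fin, Nat.choose_two_right,
    Nat.add_sub_cancel, mul_comm]

theorem sum_le_sum_mul_one_sub_of_threshold {ι : Type*} [Fintype ι] [DecidableEq ι]
    (s : Finset ι) {a τ : ι → ℝ} {c : ℝ} (hc : 0 ≤ c)
    (ha_compl : ∀ j ∉ s, c ≤ a j) (ha : ∀ j ∈ s, a j ≤ c)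
    (hτ0 : ∀ j, 0 ≤ τ j) (hτ1 : ∀ j, τ j ≤ 1) (hτ : ∑ j, τ j ≤ #sᶜ) :
    ∑ j ∈ s, a j ≤ ∑ j, a j * (1 - τ j) := by
  -- summed over `j`, the left-hand sides add up to `c * (#sᶜ - ∑ τ) ≥ 0`
  have key : ∀ j, c * ((if j ∈ sᶜ then 1 else 0) - τ j)
      ≤ a j * (1 - τ j) - if j ∈ s then a j else 0 := by
    intro j
    by_cases hj : j ∈ s
    · simp only [hj, mem_compl, not_true_eq_false, if_true, if_false]
      nlinarith [mul_le_mul_of_nonneg_right (ha j hj) (hτ0 j)]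
    · simp only [hj, mem_compl, not_false_eq_true, if_true, if_false]
      nlinarith [mul_le_mul_of_nonneg_right (ha_compl j hj) (sub_nonneg.2 (hτ1 j))]
  have hsum := sum_le_sum fun j (_ : j ∈ univ) => key j
  rw [← mul_sum, sum_sub_distrib, sum_sub_distrib, sum_ite_mem, sum_ite_mem,
    univ_inter, univ_inter, sum_const, nsmul_one] at hsum
  nlinarith [mul_nonneg hc (sub_nonneg.2 hτ)]

theorem sum_filter_le_le_sum_mul_one_sub_of_antitone {ℓ m : ℕ} {a τ : Fin ℓ → ℝ}
    (ha : Antitone a) (ha0 : 0 ≤ a) (hτ0 : ∀ j, 0 ≤ τ j) (hτ1 : ∀ j, τ j ≤ 1) (hτ : ∑ j, τ j ≤ m) :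
    ∑ j ∈ univ.filter (fun j : Fin ℓ => m ≤ (j : ℕ)), a j ≤ ∑ j, a j * (1 - τ j) := by
  rcases lt_or_ge m ℓ with hm | hm
  · have hcompl : ({j : Fin ℓ | m ≤ (j : ℕ)} : Finset (Fin ℓ))ᶜ = Iio ⟨m, hm⟩ := by
      ext j; simp [Fin.lt_def]
    refine sum_le_sum_mul_one_sub_of_threshold _ (ha0 ⟨m, hm⟩) (fun j hj => ha ?_)
      (fun j hj => ha ?_) hτ0 hτ1 (by rwa [hcompl, Fin.card_Iio])
    · simp only [mem_filter, mem_univ, true_and, not_le] at hj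
      exact Fin.le_def.2 hj.le
    · exact Fin.le_def.2 (mem_filter.1 hj).2
  · have hempty : ({j : Fin ℓ | m ≤ (j : ℕ)} : Finset (Fin ℓ)) = ∅ := by
      ext j; simp only [mem_filter, mem_univ, true_and, notMem_empty, iff_false, not_le]; omega
    rw [hempty, sum_empty]
    exact sum_nonneg fun j _ => mul_nonneg (ha0 j) (sub_nonneg.2 (hτ1 j))

section InnerProductSpace

variable {E : Type*} [NormedAddCommGroup E] [InnerProductSpace ℝ E]

theorem sum_norm_sq_sum_smul_eq {ι κ : Type*} [Fintype ι] [DecidableEq ι] [Fintype κ]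
    {v : ι → κ → ℝ} (hv : ∀ j j', ∑ i, v j i * v j' i = if j = j' then 1 else 0) (w : ι → E) :
    ∑ i, ‖∑ j, v j i • w j‖ ^ 2 = ∑ j, ‖w j‖ ^ 2 := by
  simp_rw [← real_inner_self_eq_norm_sq, sum_inner, inner_sum, real_inner_smul_left,
    real_inner_smul_right]
  calc ∑ i, ∑ j, ∑ j', v j i * (v j' i * inner ℝ (w j) (w j'))
      = ∑ j, ∑ j', (∑ i, v j i * v j' i) * inner ℝ (w j) (w j') := by
        rw [sum_comm]
        refine sum_congr rfl fun j _ => ?_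
        rw [sum_comm]
        simp_rw [sum_mul, mul_assoc]
    _ = ∑ j, inner ℝ (w j) (w j) := by simp [hv]

theorem norm_starProjection_orthogonal_le {K : Submodule ℝ E} [K.HasOrthogonalProjection]
    (x : E) {y : E} (hy : y ∈ K) : ‖Kᗮ.starProjection x‖ ≤ ‖y - x‖ := by
  rw [norm_sub_rev, Submodule.starProjection_orthogonal_val, Submodule.starProjection_minimal]
  exact ciInf_le ⟨0, Set.forall_mem_range.2 fun _ => norm_nonneg _⟩ (⟨y, hy⟩ : K)

theorem sum_norm_sq_starProjection_le_finrank (K : Submodule ℝ E) [FiniteDimensional ℝ K]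
    {ι : Type*} [Fintype ι] {u : ι → E} (hu : Orthonormal ℝ u) :
    ∑ j, ‖K.starProjection (u j)‖ ^ 2 ≤ finrank ℝ K := by
  let b := stdOrthonormalBasis ℝ K
  have hb : ∀ x, ‖K.starProjection x‖ ^ 2 = ∑ s, inner ℝ x (b s : E) ^ 2 := by
    intro x
    rw [Submodule.starProjection_apply, Submodule.norm_coe, ← b.sum_sq_inner_right]
    simp_rw [Submodule.inner_orthogonalProjectionOnto_eq_of_mem_left, real_inner_comm]
  calc ∑ j, ‖K.starProjection (u j)‖ ^ 2 = ∑ s, ∑ j, inner ℝ (u j) (b s : E) ^ 2 := by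
        simp_rw [hb]; exact sum_comm
    _ ≤ ∑ s, ‖(b s : E)‖ ^ 2 := by
        refine sum_le_sum fun s _ => ?_
        simpa only [Real.norm_eq_abs, sq_abs] using hu.sum_inner_products_le (b s : E) (s := univ)
    _ = finrank ℝ K := by simp [Submodule.norm_coe, b.norm_eq_one]

theorem sum_filter_sq_le_sum_norm_sq_starProjection_orthogonal (K : Submodule ℝ E)
    [FiniteDimensional ℝ K] {ℓ m : ℕ} (hK : finrank ℝ K ≤ m) {κ : Type*} [Fintype κ]
    {σ : Fin ℓ → ℝ} (hσ : Antitone σ) (hσ0 : 0 ≤ σ) {u : Fin ℓ → E} (hu : Orthonormal ℝ u)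
    {v : Fin ℓ → κ → ℝ} (hv : ∀ j j', ∑ i, v j i * v j' i = if j = j' then 1 else 0) :
    ∑ j ∈ univ.filter (fun j : Fin ℓ => m ≤ (j : ℕ)), σ j ^ 2
      ≤ ∑ i, ‖Kᗮ.starProjection (∑ j, (σ j * v j i) • u j)‖ ^ 2 := by
  have hpyth : ∀ j, ‖K.starProjection (u j)‖ ^ 2 + ‖Kᗮ.starProjection (u j)‖ ^ 2 = 1 := by
    intro j
    rw [← K.norm_sq_eq_add_norm_sq_starProjection, hu.1 j, one_pow]
  calc ∑ j ∈ univ.filter (fun j : Fin ℓ => m ≤ (j : ℕ)), σ j ^ 2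
      ≤ ∑ j, σ j ^ 2 * (1 - ‖K.starProjection (u j)‖ ^ 2) := by
        refine sum_filter_le_le_sum_mul_one_sub_of_antitone
          (fun i j hij => pow_le_pow_left₀ (hσ0 j) (hσ hij) 2) (fun j => sq_nonneg (σ j))
          (fun j => sq_nonneg _) (fun j => ?_) ?_
        · nlinarith [hpyth j, sq_nonneg ‖Kᗮ.starProjection (u j)‖]
        · exact (sum_norm_sq_starProjection_le_finrank K hu).trans (by exact_mod_cast hK)
    _ = ∑ j, ‖Kᗮ.starProjection (σ j • u j)‖ ^ 2 := by
        refine sum_congr rfl fun j _ => ?_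
        rw [map_smul, norm_smul, mul_pow, Real.norm_eq_abs, sq_abs, ← hpyth j, add_sub_cancel_left]
    _ = ∑ i, ‖Kᗮ.starProjection (∑ j, (σ j * v j i) • u j)‖ ^ 2 := by
        rw [← sum_norm_sq_sum_smul_eq hv]
        simp_rw [map_sum, map_smul, smul_smul, mul_comm]

end InnerProductSpace

open WithLp in
theorem quadratic_manifold_approx_lower_bound_general
    (n k r : ℕ)
    (V : Matrix (Fin n) (Fin r) ℝ)
    (W : Matrix (Fin n) {ij : Fin r × Fin r // ij.1 ≤ ij.2} ℝ)
    (S : Matrix (Fin n) (Fin k) ℝ)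
    (σ : Fin (min n k) → ℝ) (u : Fin (min n k) → Fin n → ℝ)
    (v : Fin (min n k) → Fin k → ℝ)
    (hσdec : ∀ i j : Fin (min n k), i ≤ j → σ j ≤ σ i)
    (hσ0 : ∀ i, 0 ≤ σ i)
    (hu : ∀ i j, ∑ x, u i x * u j x = if i = j then (1 : ℝ) else 0)
    (hv : ∀ i j, ∑ y, v i y * v j y = if i = j then (1 : ℝ) else 0)
    (hS : S = ∑ i, σ i • Matrix.vecMulVec (u i) (v i)) :
    ∑ i : Fin k,
        sInf ((fun xhat : Fin n → ℝ => ∑ j, (xhat j - S j i) ^ 2) ''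
          {xhat | ∃ z : Fin r → ℝ,
            xhat = V.mulVec z +
              W.mulVec (fun ij : {ij : Fin r × Fin r // ij.1 ≤ ij.2} =>
                z ij.val.1 * z ij.val.2)})
      ≥ ∑ i ∈ Finset.univ.filter
            (fun i : Fin (min n k) => r * (r + 1) / 2 + r ≤ (i : ℕ)), σ i ^ 2 := by
  let K : Submodule ℝ (EuclideanSpace ℝ (Fin n)) :=
    LinearMap.range (Matrix.toEuclideanLin V) ⊔ LinearMap.range (Matrix.toEuclideanLin W)
  have hK : finrank ℝ K ≤ r * (r + 1) / 2 + r := by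
    refine (Submodule.finrank_add_le_finrank_add_finrank _ _).trans ?_
    have hV := LinearMap.finrank_range_le (Matrix.toEuclideanLin V)
    have hW := LinearMap.finrank_range_le (Matrix.toEuclideanLin W)
    rw [finrank_euclideanSpace, Fintype.card_fin] at hV
    rw [finrank_euclideanSpace, card_subtype_fst_le_snd] at hW
    omega
  have hmem : ∀ z y, toLp 2 (V.mulVec z + W.mulVec y) ∈ K := fun z y =>
    Submodule.add_mem_sup (LinearMap.mem_range_self _ (toLp 2 z))
      (LinearMap.mem_range_self _ (toLp 2 y))
  have hu' : Orthonormal ℝ fun j => toLp 2 (u j) := orthonormal_iff_ite.2 fun i j => by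
    simpa [EuclideanSpace.inner_toLp_toLp, dotProduct, mul_comm] using hu i j
  have hcol : ∀ i, toLp 2 (fun a => S a i) = ∑ j, (σ j * v j i) • toLp 2 (u j) := by
    intro i
    ext a
    simp [hS, Matrix.sum_apply, Matrix.vecMulVec_apply, mul_comm, mul_left_comm]
  calc _ ≤ ∑ i, ‖Kᗮ.starProjection (toLp 2 fun a => S a i)‖ ^ 2 := by
        simpa only [hcol] using
          sum_filter_sq_le_sum_norm_sq_starProjection_orthogonal K hK hσdec hσ0 hu' hv
    _ ≤ _ := by
        refine sum_le_sum fun i _ => le_csInf (Set.Nonempty.image _ ⟨_, 0, rfl⟩) ?_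
        rintro _ ⟨_, ⟨z, rfl⟩, rfl⟩
        exact (pow_le_pow_left₀ (norm_nonneg _)
          (norm_starProjection_orthogonal_le _ (hmem z _)) 2).trans_eq
          (EuclideanSpace.real_norm_sq_eq _)

/-- lower bound for approximation on a quadratic manifold, where the
feature map is the quadratic feature map with components `z i * z j`, `i ≤ j`
(indexed by the pairs `(i, j)` with `i ≤ j`, of which there are `r * (r + 1) / 2`). -/
theorem quadratic_manifold_approx_lower_bound
    (n k r : ℕ) (hr : r ≤ min n k)
    (V : Matrix (Fin n) (Fin r) ℝ)
    (W : Matrix (Fin n) {ij : Fin r × Fin r // ij.1 ≤ ij.2} ℝ)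
    (S : Matrix (Fin n) (Fin k) ℝ)
    (σ : Fin (min n k) → ℝ) (u : Fin (min n k) → Fin n → ℝ)
    (v : Fin (min n k) → Fin k → ℝ)
    (hσdec : ∀ i j : Fin (min n k), i ≤ j → σ j ≤ σ i)
    (hσ0 : ∀ i, 0 ≤ σ i)
    (hu : ∀ i j, ∑ x, u i x * u j x = if i = j then (1 : ℝ) else 0)
    (hv : ∀ i j, ∑ y, v i y * v j y = if i = j then (1 : ℝ) else 0)
    (hS : S = ∑ i, σ i • Matrix.vecMulVec (u i) (v i)) :
    ∑ i : Fin k,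
        sInf ((fun xhat : Fin n → ℝ => ∑ j, (xhat j - S j i) ^ 2) ''
          {xhat | ∃ z : Fin r → ℝ,
            xhat = V.mulVec z +
              W.mulVec (fun ij : {ij : Fin r × Fin r // ij.1 ≤ ij.2} =>
                z ij.val.1 * z ij.val.2)})
      ≥ ∑ i ∈ Finset.univ.filter
            (fun i : Fin (min n k) => r * (r + 1) / 2 + r ≤ (i : ℕ)), σ i ^ 2 :=
  quadratic_manifold_approx_lower_bound_general n k r V W S σ u v hσdec hσ0 hu hv hS
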